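/- arXiv:2603.21375 — 2 statements merged into one kernel-verified Lean document; each statement's English description precedes it below -/
import Mathlib

section
/- With the quadratic penalty Φ(v) := v²/√T, the cumulative constraint violation of the adaptive OGD iterates satisfies the explicit bound V̂_T ≤ √(2T)·D·L_g + √(2T·D²·L_g² + √2·√T·D + √2·T·D·L_f + 2·F·T^{3/2}), provided there exists a feasible point u ∈ X with ĝ_t(u) ≤ 0 for all t ∈ {1,…,T}. -/
/-!
Adaptive OGD on the surrogate losses `L̂_t` has regret at most `√2·D·√δ_T` against any point
of `X`. Against a feasible point `v`, where `ĝ_t⁺(v) = 0`, that regret dominates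
`Σ_t Φ'(V̂_t)·ĝ_t⁺(x_t) − 2FT`, and by convexity of `Φ` the sum is at least `Φ(V̂_T) = V̂_T²/√T`.
The subgradients are bounded by `L_f + Φ'(V̂_T)·L_g`, so `√δ_T ≤ 1 + √T·L_f + 2·V̂_T·L_g`.
Combining gives a quadratic inequality `V̂_T² ≤ 2b·V̂_T + c`, hence `V̂_T ≤ b + √(b² + c)`.
-/

open Finset Real
open scoped RealInnerProductSpace

theorem le_add_sqrt_of_sq_le_two_mul_add {a b c : ℝ} (h : a ^ 2 ≤ 2 * b * a + c) :
    a ≤ b + √(b ^ 2 + c) := by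
  have hsq : (a - b) ^ 2 ≤ b ^ 2 + c := by linarith
  linarith [le_abs_self (a - b), abs_le_sqrt hsq]

theorem sub_div_sqrt_le_two_mul_sqrt_sub {a b : ℝ} (hb : 0 ≤ b) (hba : b ≤ a) :
    (a - b) / √a ≤ 2 * (√a - √b) := by
  rcases (hb.trans hba).eq_or_lt with rfl | ha
  · obtain rfl := le_antisymm hba hb
    simp
  have hsqrt_le : √b ≤ √a := sqrt_le_sqrt hba
  rw [div_le_iff₀ (sqrt_pos.2 ha)]
  nlinarith [sq_sqrt ha.le, sq_sqrt hb, sq_nonneg (√a - √b)]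

theorem sum_div_sqrt_add_partial_sum_le {s : ℕ → ℝ} (hs : ∀ t, 0 ≤ s t) {c : ℝ} (hc : 0 ≤ c)
    (T : ℕ) :
    ∑ t ∈ Icc 1 T, s t / √(c + ∑ τ ∈ Icc 1 t, s τ)
      ≤ 2 * (√(c + ∑ t ∈ Icc 1 T, s t) - √c) := by
  induction T with
  | zero => simp
  | succ n ih =>
    rw [sum_Icc_succ_top (by omega), sum_Icc_succ_top (by omega)]
    have hpartial : 0 ≤ c + ∑ t ∈ Icc 1 n, s t := add_nonneg hc (sum_nonneg fun t _ => hs t)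
    have hlast := sub_div_sqrt_le_two_mul_sqrt_sub hpartial (le_add_of_nonneg_right (hs (n + 1)))
    rw [add_sub_cancel_left] at hlast
    rw [← add_assoc]
    linarith

theorem sq_sum_le_sum_two_mul_partial_sum_mul (a : ℕ → ℝ) (T : ℕ) :
    (∑ t ∈ Icc 1 T, a t) ^ 2 ≤ ∑ t ∈ Icc 1 T, 2 * (∑ τ ∈ Icc 1 t, a τ) * a t := by
  induction T with
  | zero => simp
  | succ n ih =>
    rw [sum_Icc_succ_top (by omega), sum_Icc_succ_top (by omega), sum_Icc_succ_top (by omega)]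
    nlinarith [sq_nonneg (a (n + 1))]

theorem sum_Ico_mul_sub_add_le {w a : ℕ → ℝ} {C : ℝ} (hw : Monotone w) (hw₁ : 0 ≤ w 1)
    {T : ℕ} (hT : 1 ≤ T) (ha : ∀ t ∈ Icc 1 T, a t ≤ C) :
    ∑ t ∈ Ico 1 T, w t * (a t - a (t + 1)) + w T * a T ≤ w T * C := by
  induction T, hT using Nat.le_induction with
  | base => simpa using mul_le_mul_of_nonneg_left (ha 1 (by simp)) hw₁
  | succ n hn ih =>
    rw [sum_Ico_succ_top hn]
    have ih' := ih fun t ht => ha t (Icc_subset_Icc_right n.le_succ ht)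
    have han : a (n + 1) ≤ C := ha (n + 1) (by simp)
    nlinarith [mul_le_mul_of_nonneg_left han (sub_nonneg.2 (hw n.le_succ))]

theorem nonneg_of_abs_sub_le_mul_norm {E : Type*} [NormedAddCommGroup E] {φ : E → ℝ} {L : ℝ}
    {a b : E} (hab : a ≠ b) (h : |φ a - φ b| ≤ L * ‖a - b‖) : 0 ≤ L :=
  nonneg_of_mul_nonneg_left ((abs_nonneg _).trans h) (norm_pos_iff.2 (sub_ne_zero.2 hab))

theorem sqrt_one_add_sum_sq_le {E : Type*} [SeminormedAddGroup E] {u : ℕ → E} {K : ℝ} {T : ℕ}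
    (hu : ∀ t ∈ Icc 1 T, ‖u t‖ ≤ K) :
    √(1 + ∑ t ∈ Icc 1 T, ‖u t‖ ^ 2) ≤ 1 + √T * K := by
  rcases Nat.eq_zero_or_pos T with rfl | hT
  · simp
  have hK : 0 ≤ K := (norm_nonneg _).trans (hu 1 (mem_Icc.2 ⟨le_rfl, hT⟩))
  have hsum : ∑ t ∈ Icc 1 T, ‖u t‖ ^ 2 ≤ T * K ^ 2 := by
    simpa using sum_le_sum fun t ht => pow_le_pow_left₀ (norm_nonneg _) (hu t ht) 2
  rw [sqrt_le_left (by positivity)]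
  nlinarith [sq_sqrt (Nat.cast_nonneg (α := ℝ) T), sqrt_nonneg (T : ℝ)]

section InnerProductSpace

variable {E : Type*} [NormedAddCommGroup E] [InnerProductSpace ℝ E]

theorem norm_sub_sq_le_of_forall_norm_sub_le {X : Set E} (hX : Convex ℝ X) {y z v : E}
    (hy : y ∈ X) (hmin : ∀ w ∈ X, ‖y - z‖ ≤ ‖w - z‖) (hv : v ∈ X) :
    ‖y - v‖ ^ 2 ≤ ‖z - v‖ ^ 2 := by
  have : Nonempty X := ⟨⟨y, hy⟩⟩
  have hinf : ‖z - y‖ = ⨅ w : X, ‖z - w‖ :=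
    le_antisymm (le_ciInf fun w => by simpa only [norm_sub_rev z] using hmin w w.2)
      (ciInf_le ⟨0, by rintro _ ⟨w, rfl⟩; exact norm_nonneg _⟩ (⟨y, hy⟩ : X))
  have hobtuse := (norm_eq_iInf_iff_real_inner_le_zero hX hy).1 hinf v hv
  have hexpand : ‖z - v‖ ^ 2 = ‖z - y‖ ^ 2 - 2 * ⟪z - y, v - y⟫ + ‖v - y‖ ^ 2 := by
    rw [← norm_sub_sq_real, sub_sub_sub_cancel_right]
  rw [norm_sub_rev y]
  nlinarith [sq_nonneg ‖z - y‖]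

theorem inner_le_of_le_norm_sub_smul_sq {η r : ℝ} {g w : E} (hη : 0 < η)
    (hr : r ≤ ‖w - η • g‖ ^ 2) :
    ⟪g, w⟫ ≤ (2 * η)⁻¹ * (‖w‖ ^ 2 - r) + η / 2 * ‖g‖ ^ 2 := by
  have hexpand : ‖w - η • g‖ ^ 2 = ‖w‖ ^ 2 - 2 * η * ⟪g, w⟫ + η ^ 2 * ‖g‖ ^ 2 := by
    rw [norm_sub_sq_real, real_inner_smul_right, norm_smul, norm_of_nonneg hη.le,
      real_inner_comm]
    ring
  have hgap : (2 * η)⁻¹ * (‖w‖ ^ 2 - r) + η / 2 * ‖g‖ ^ 2 - ⟪g, w⟫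
      = (2 * η)⁻¹ * (‖w - η • g‖ ^ 2 - r) := by
    rw [hexpand]
    field_simp
    ring
  linarith [mul_nonneg (inv_nonneg.2 (mul_pos two_pos hη).le) (sub_nonneg.2 hr)]

theorem norm_le_of_subgradient {h : E → ℝ} {x u : E} {K : ℝ} (hK : 0 ≤ K)
    (hsub : ∀ y, h y ≥ h x + ⟪u, y - x⟫) (hlip : ∀ y, h y - h x ≤ K * ‖y - x‖) :
    ‖u‖ ≤ K := by
  have hsq : ‖u‖ ^ 2 ≤ K * ‖u‖ := by
    have h₁ := hsub (x + u)
    have h₂ := hlip (x + u)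
    rw [add_sub_cancel_left, real_inner_self_eq_norm_sq] at h₁
    rw [add_sub_cancel_left] at h₂
    linarith
  rcases (norm_nonneg u).eq_or_lt with h0 | h0
  · exact h0 ▸ hK
  · nlinarith

theorem ogd_regret_le {X : Set E} (hX : Convex ℝ X) {x u : ℕ → E} {η : ℕ → ℝ} {v : E} {D : ℝ}
    {T : ℕ} (hT : 1 ≤ T) (hη : ∀ t, 0 < η t) (hη_anti : Antitone η)
    (hx : ∀ t ∈ Icc 1 T, x t ∈ X) (hv : v ∈ X) (hxv : ∀ t ∈ Icc 1 T, ‖x t - v‖ ≤ D)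
    (hupdate : ∀ t ∈ Ico 1 T, ∀ y ∈ X,
      ‖x (t + 1) - (x t - η t • u t)‖ ≤ ‖y - (x t - η t • u t)‖) :
    ∑ t ∈ Icc 1 T, ⟪u t, x t - v⟫
      ≤ (2 * η T)⁻¹ * D ^ 2 + ∑ t ∈ Icc 1 T, η t / 2 * ‖u t‖ ^ 2 := by
  have hstep : ∀ t ∈ Ico 1 T, ⟪u t, x t - v⟫
      ≤ (2 * η t)⁻¹ * (‖x t - v‖ ^ 2 - ‖x (t + 1) - v‖ ^ 2) + η t / 2 * ‖u t‖ ^ 2 := by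
    intro t ht
    have hmem : t + 1 ∈ Icc 1 T := by simp only [mem_Ico, mem_Icc] at ht ⊢; omega
    refine inner_le_of_le_norm_sub_smul_sq (hη t) ?_
    rw [sub_right_comm]
    exact norm_sub_sq_le_of_forall_norm_sub_le hX (hx _ hmem) (hupdate t ht) hv
  -- there is no projection after the last step, so its term is bounded with `r = 0`
  have hlast : ⟪u T, x T - v⟫ ≤ (2 * η T)⁻¹ * (‖x T - v‖ ^ 2 - 0) + η T / 2 * ‖u T‖ ^ 2 :=
    inner_le_of_le_norm_sub_smul_sq (hη T) (sq_nonneg _)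
  have hw : Monotone fun t => (2 * η t)⁻¹ := fun s t hst =>
    inv_anti₀ (mul_pos two_pos (hη t)) (mul_le_mul_of_nonneg_left (hη_anti hst) zero_le_two)
  have htele := sum_Ico_mul_sub_add_le hw (inv_nonneg.2 (mul_pos two_pos (hη 1)).le) hT
    fun t ht => pow_le_pow_left₀ (norm_nonneg _) (hxv t ht) 2
  have hsum := sum_le_sum hstep
  rw [sum_add_distrib] at hsum
  rw [← Ico_add_one_right_eq_Icc, sum_Ico_succ_top hT, sum_Ico_succ_top hT]
  linarith

theorem adaptive_ogd_regret_le {X : Set E} (hX : Convex ℝ X) {x u : ℕ → E} {δ η : ℕ → ℝ} {v : E}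
    {D : ℝ} {T : ℕ} (hT : 1 ≤ T) (hD : 0 < D)
    (hδ : ∀ t, δ t = 1 + ∑ τ ∈ Icc 1 t, ‖u τ‖ ^ 2) (hη : ∀ t, η t = D / (√2 * √(δ t)))
    (hx : ∀ t ∈ Icc 1 T, x t ∈ X) (hv : v ∈ X) (hxv : ∀ t ∈ Icc 1 T, ‖x t - v‖ ≤ D)
    (hupdate : ∀ t ∈ Ico 1 T, ∀ y ∈ X,
      ‖x (t + 1) - (x t - η t • u t)‖ ≤ ‖y - (x t - η t • u t)‖) :
    ∑ t ∈ Icc 1 T, ⟪u t, x t - v⟫ ≤ √2 * D * √(δ T) := by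
  have hδ_pos : ∀ t, 0 < δ t := fun t => by rw [hδ]; positivity
  have hδ_mono : Monotone δ := fun s t hst => by
    rw [hδ, hδ]
    gcongr
  have hη_pos : ∀ t, 0 < η t := fun t => by rw [hη]; have := hδ_pos t; positivity
  have hη_anti : Antitone η := fun s t hst => by
    rw [hη, hη]
    have := hδ_pos s
    gcongr
    exact hδ_mono hst
  have hsteps : ∑ t ∈ Icc 1 T, η t / 2 * ‖u t‖ ^ 2
      = D / (2 * √2) * ∑ t ∈ Icc 1 T, ‖u t‖ ^ 2 / √(1 + ∑ τ ∈ Icc 1 t, ‖u τ‖ ^ 2) := by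
    rw [mul_sum]
    refine sum_congr rfl fun t _ => ?_
    rw [hη, ← hδ]
    field_simp
  have hadagrad := sum_div_sqrt_add_partial_sum_le (fun t => sq_nonneg ‖u t‖) zero_le_one T
  rw [← hδ, sqrt_one] at hadagrad
  have hsqrt2 : √2 ^ 2 = 2 := sq_sqrt zero_le_two
  calc ∑ t ∈ Icc 1 T, ⟪u t, x t - v⟫
      ≤ (2 * η T)⁻¹ * D ^ 2 + D / (2 * √2) * (2 * (√(δ T) - 1)) := by
        refine (ogd_regret_le hX hT hη_pos hη_anti hx hv hxv hupdate).trans ?_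
        rw [hsteps]
        gcongr
    _ ≤ √2 * D * √(δ T) := by
        rw [hη T]
        field_simp
        rw [hsqrt2]
        linarith

theorem violation_sq_div_le_regret_add {X : Set E} {f g L : ℕ → E → ℝ} {x u : ℕ → E}
    {V : ℕ → ℝ} {v : E} {s F : ℝ} {T : ℕ} (hs : 0 ≤ s)
    (hfbd : ∀ t ∈ Icc 1 T, ∀ y ∈ X, |f t y| ≤ F) (hx : ∀ t ∈ Icc 1 T, x t ∈ X) (hv : v ∈ X)
    (hgv : ∀ t ∈ Icc 1 T, g t v ≤ 0)
    (hV : ∀ t, V t = ∑ τ ∈ Icc 1 t, max (g τ (x τ)) 0)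
    (hL : ∀ t y, L t y = f t y + (2 * V t / s) * max (g t y) 0)
    (hsub : ∀ t ∈ Icc 1 T, ∀ y, L t y ≥ L t (x t) + ⟪u t, y - x t⟫) :
    V T ^ 2 / s ≤ ∑ t ∈ Icc 1 T, ⟪u t, x t - v⟫ + 2 * F * T := by
  have hstep : ∀ t ∈ Icc 1 T, 2 * V t / s * max (g t (x t)) 0 ≤ ⟪u t, x t - v⟫ + 2 * F := by
    intro t ht
    have h := hsub t ht v
    rw [hL, hL, max_eq_right (hgv t ht), mul_zero, add_zero, ← neg_sub (x t) v,
      inner_neg_right] at h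
    have hfx := abs_le.1 (hfbd t ht _ (hx t ht))
    have hfv := abs_le.1 (hfbd t ht v hv)
    linarith
  calc V T ^ 2 / s ≤ (∑ t ∈ Icc 1 T, 2 * V t * max (g t (x t)) 0) / s := by
        gcongr
        simp only [hV]
        exact sq_sum_le_sum_two_mul_partial_sum_mul _ T
    _ = ∑ t ∈ Icc 1 T, 2 * V t / s * max (g t (x t)) 0 := by
        rw [sum_div]
        exact sum_congr rfl fun t _ => by ring
    _ ≤ ∑ t ∈ Icc 1 T, (⟪u t, x t - v⟫ + 2 * F) := sum_le_sum hstep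
    _ = ∑ t ∈ Icc 1 T, ⟪u t, x t - v⟫ + 2 * F * T := by simp [sum_add_distrib, mul_comm]

theorem norm_surrogate_subgradient_le {f g L : ℕ → E → ℝ} {x u : ℕ → E} {V : ℕ → ℝ}
    {s Lf Lg : ℝ} {T : ℕ} (hs : 0 ≤ s) (hLf : 0 ≤ Lf) (hLg : 0 ≤ Lg)
    (hfLip : ∀ t ∈ Icc 1 T, ∀ y z, |f t y - f t z| ≤ Lf * ‖y - z‖)
    (hgLip : ∀ t ∈ Icc 1 T, ∀ y z, |g t y - g t z| ≤ Lg * ‖y - z‖)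
    (hV : ∀ t, V t = ∑ τ ∈ Icc 1 t, max (g τ (x τ)) 0)
    (hL : ∀ t y, L t y = f t y + (2 * V t / s) * max (g t y) 0)
    (hsub : ∀ t ∈ Icc 1 T, ∀ y, L t y ≥ L t (x t) + ⟪u t, y - x t⟫) :
    ∀ t ∈ Icc 1 T, ‖u t‖ ≤ Lf + 2 * V T / s * Lg := by
  intro t ht
  have hVt : 0 ≤ V t := by
    rw [hV]
    exact sum_nonneg fun _ _ => le_max_right _ _
  have hVT : V t ≤ V T := by
    rw [hV, hV]
    exact sum_le_sum_of_subset_of_nonneg (Icc_subset_Icc_right (mem_Icc.1 ht).2)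
      fun _ _ _ => le_max_right _ _
  have hpenalty : 0 ≤ 2 * V t / s := by positivity
  refine (norm_le_of_subgradient (K := Lf + 2 * V t / s * Lg) (by positivity) (hsub t ht)
    fun y => ?_).trans (by gcongr)
  rw [hL, hL]
  have hf := (abs_le.1 (hfLip t ht y (x t))).2
  have hg := (abs_le.1 ((abs_max_sub_max_le_abs _ _ 0).trans (hgLip t ht y (x t)))).2
  nlinarith [mul_le_mul_of_nonneg_left hg hpenalty]

end InnerProductSpace

theorem le_ccv_bound_of_regret_le {V R δ T D Lf Lg F : ℝ} (hT : 0 < T) (hD : 0 ≤ D)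
    (hsurrogate : V ^ 2 / √T ≤ R + 2 * F * T) (hregret : R ≤ √2 * D * √δ)
    (hδ : √δ ≤ 1 + √T * (Lf + 2 * V / √T * Lg)) :
    V ≤ √(2 * T) * D * Lg
      + √(2 * T * D ^ 2 * Lg ^ 2 + √2 * √T * D + √2 * T * D * Lf + 2 * F * T ^ ((3:ℝ)/2)) := by
  have hsqrtT : 0 < √T := sqrt_pos.2 hT
  have hδ' : √δ ≤ 1 + √T * Lf + 2 * V * Lg := hδ.trans_eq (by field_simp; ring)
  have hT32 : T ^ ((3:ℝ)/2) = T * √T := by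
    rw [show (3:ℝ)/2 = 1 + 1/2 by norm_num, rpow_add hT, rpow_one, ← sqrt_eq_rpow]
  have hquad : V ^ 2 ≤ 2 * (√(2 * T) * D * Lg) * V
      + (√2 * √T * D + √2 * T * D * Lf + 2 * F * T ^ ((3:ℝ)/2)) := by
    have h := (div_le_iff₀ hsqrtT).1 (hsurrogate.trans (add_le_add_left
      (hregret.trans (mul_le_mul_of_nonneg_left hδ' (by positivity))) _))
    rw [sqrt_mul zero_le_two, hT32]
    linear_combination h + √2 * D * Lf * mul_self_sqrt hT.le
  convert le_add_sqrt_of_sq_le_two_mul_add hquad using 3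
  rw [mul_pow, mul_pow, sq_sqrt (by positivity)]
  ring

theorem quadratic_penalty_ogd_ccv_general
    (d T : ℕ) (hT : 0 < T)
    (X : Set (EuclideanSpace ℝ (Fin d)))
    (hXcpt : IsCompact X) (hXconv : Convex ℝ X)
    (D : ℝ) (hD : D = Metric.diam X)
    (Lf Lg F : ℝ)
    (f g : ℕ → EuclideanSpace ℝ (Fin d) → ℝ)
    (hfLip : ∀ t ∈ Finset.Icc 1 T, ∀ x y, |f t x - f t y| ≤ Lf * ‖x - y‖)
    (hgLip : ∀ t ∈ Finset.Icc 1 T, ∀ x y, |g t x - g t y| ≤ Lg * ‖x - y‖)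
    (hfbd : ∀ t ∈ Finset.Icc 1 T, ∀ x ∈ X, |f t x| ≤ F)
    -- decisions and subgradients
    (x u : ℕ → EuclideanSpace ℝ (Fin d))
    (hx : ∀ t ∈ Finset.Icc 1 T, x t ∈ X)
    -- cumulative violation and surrogate losses with quadratic penalty
    (V : ℕ → ℝ)
    (hV : ∀ t, V t = ∑ τ ∈ Finset.Icc 1 t, max (g τ (x τ)) 0)
    (L : ℕ → EuclideanSpace ℝ (Fin d) → ℝ)
    (hL : ∀ t y, L t y = f t y + (2 * V t / Real.sqrt T) * max (g t y) 0)
    -- u t is a subgradient of L t at x t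
    (hsub : ∀ t ∈ Finset.Icc 1 T, ∀ y,
      L t y ≥ L t (x t) + (inner ℝ (u t) (y - x t) : ℝ))
    -- step sizes
    (δ η : ℕ → ℝ)
    (hδ : ∀ t, δ t = 1 + ∑ τ ∈ Finset.Icc 1 t, ‖u τ‖ ^ 2)
    (hη : ∀ t, η t = D / (Real.sqrt 2 * Real.sqrt (δ t)))
    -- projected gradient update
    (hupdate : ∀ t ∈ Finset.Icc 1 (T - 1), ∀ y ∈ X,
      ‖x (t+1) - (x t - η t • u t)‖ ≤ ‖y - (x t - η t • u t)‖)
    -- a feasible point exists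
    (hfeas : ∃ v ∈ X, ∀ t ∈ Finset.Icc 1 T, g t v ≤ 0) :
    V T ≤ Real.sqrt (2 * T) * D * Lg
        + Real.sqrt (2 * T * D ^ 2 * Lg ^ 2 + Real.sqrt 2 * Real.sqrt T * D
            + Real.sqrt 2 * T * D * Lf + 2 * F * (T : ℝ) ^ ((3:ℝ)/2)) := by
  obtain ⟨v, hv, hgv⟩ := hfeas
  rcases X.subsingleton_or_nontrivial with hXs | ⟨a, ha, b, hb, hab⟩
  · have hVT : V T = 0 := by
      rw [hV]
      exact sum_eq_zero fun t ht => by rw [hXs (hx t ht) hv, max_eq_right (hgv t ht)]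
    rw [hVT, hD, Metric.diam_subsingleton hXs, mul_zero, zero_mul, zero_add]
    exact sqrt_nonneg _
  have hDpos : 0 < D := hD ▸ Metric.diam_pos ⟨a, ha, b, hb, hab⟩ hXcpt.isBounded
  have hxv : ∀ t ∈ Icc 1 T, ‖x t - v‖ ≤ D := fun t ht => by
    rw [hD, ← dist_eq_norm]
    exact Metric.dist_le_diam_of_mem hXcpt.isBounded (hx t ht) hv
  have hsqrtT : 0 < √(T : ℝ) := sqrt_pos.2 (Nat.cast_pos.2 hT)
  have h1T : 1 ∈ Icc 1 T := mem_Icc.2 ⟨le_rfl, hT⟩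
  have hregret := adaptive_ogd_regret_le hXconv hT hDpos hδ hη hx hv hxv
    fun t ht => hupdate t (by simp only [mem_Ico, mem_Icc] at ht ⊢; omega)
  have hsurrogate := violation_sq_div_le_regret_add hsqrtT.le hfbd hx hv hgv hV hL hsub
  have hu := norm_surrogate_subgradient_le hsqrtT.le
    (nonneg_of_abs_sub_le_mul_norm hab (hfLip 1 h1T a b))
    (nonneg_of_abs_sub_le_mul_norm hab (hgLip 1 h1T a b)) hfLip hgLip hV hL hsub
  exact le_ccv_bound_of_regret_le (Nat.cast_pos.2 hT) hDpos.le hsurrogate hregret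
    (hδ T ▸ sqrt_one_add_sum_sq_le hu)

/-- With the quadratic penalty `Φ(v) = v²/√T`, the cumulative
constraint violation of adaptive OGD satisfies
`V̂_T ≤ √(2T)·D·L_g + √(2T·D²·L_g² + √2·√T·D + √2·T·D·L_f + 2·F·T^{3/2})`,
provided a feasible point exists. -/
theorem quadratic_penalty_ogd_ccv
    (d T : ℕ) (hd : 0 < d) (hT : 0 < T)
    (X : Set (EuclideanSpace ℝ (Fin d)))
    (hXne : X.Nonempty) (hXcpt : IsCompact X) (hXconv : Convex ℝ X)
    (D : ℝ) (hD : D = Metric.diam X)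
    (Lf Lg F : ℝ)
    (f g : ℕ → EuclideanSpace ℝ (Fin d) → ℝ)
    (hfconv : ∀ t ∈ Finset.Icc 1 T, ConvexOn ℝ Set.univ (f t))
    (hgconv : ∀ t ∈ Finset.Icc 1 T, ConvexOn ℝ Set.univ (g t))
    (hfLip : ∀ t ∈ Finset.Icc 1 T, ∀ x y, |f t x - f t y| ≤ Lf * ‖x - y‖)
    (hgLip : ∀ t ∈ Finset.Icc 1 T, ∀ x y, |g t x - g t y| ≤ Lg * ‖x - y‖)
    (hfbd : ∀ t ∈ Finset.Icc 1 T, ∀ x ∈ X, |f t x| ≤ F)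
    -- decisions and subgradients
    (x u : ℕ → EuclideanSpace ℝ (Fin d))
    (hx : ∀ t ∈ Finset.Icc 1 T, x t ∈ X)
    -- cumulative violation and surrogate losses with quadratic penalty
    (V : ℕ → ℝ)
    (hV : ∀ t, V t = ∑ τ ∈ Finset.Icc 1 t, max (g τ (x τ)) 0)
    (L : ℕ → EuclideanSpace ℝ (Fin d) → ℝ)
    (hL : ∀ t y, L t y = f t y + (2 * V t / Real.sqrt T) * max (g t y) 0)
    -- u t is a subgradient of L t at x t
    (hsub : ∀ t ∈ Finset.Icc 1 T, ∀ y,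
      L t y ≥ L t (x t) + (inner ℝ (u t) (y - x t) : ℝ))
    -- step sizes
    (δ η : ℕ → ℝ)
    (hδ : ∀ t, δ t = 1 + ∑ τ ∈ Finset.Icc 1 t, ‖u τ‖ ^ 2)
    (hη : ∀ t, η t = D / (Real.sqrt 2 * Real.sqrt (δ t)))
    -- projected gradient update
    (hupdate : ∀ t ∈ Finset.Icc 1 (T - 1), ∀ y ∈ X,
      ‖x (t+1) - (x t - η t • u t)‖ ≤ ‖y - (x t - η t • u t)‖)
    -- a feasible point exists
    (hfeas : ∃ v ∈ X, ∀ t ∈ Finset.Icc 1 T, g t v ≤ 0) :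
    V T ≤ Real.sqrt (2 * T) * D * Lg
        + Real.sqrt (2 * T * D ^ 2 * Lg ^ 2 + Real.sqrt 2 * Real.sqrt T * D
            + Real.sqrt 2 * T * D * Lf + 2 * F * (T : ℝ) ^ ((3:ℝ)/2)) :=
  quadratic_penalty_ogd_ccv_general d T hT X hXcpt hXconv D hD Lf Lg F f g hfLip hgLip hfbd x u hx V
    hV L hL hsub δ η hδ hη hupdate hfeas
end

section
/- Forward-loss decomposition: (i) Σ_{t=m+1}^{T} L_t(x_{t−m},…,x_t) ≤ Σ_{t=m+1}^{T} Z_t(x_t); (ii) for every u ∈ ℝ^d with g_t^i(u) ≤ 0 for all t ∈ {m+1,…,T} and i ∈ {0,…,m}, Σ_{t=m+1}^{T} Z_t(u) = Σ_{t=m+1}^{T} L_t(u,…,u), and consequently Φ(V_T) − Φ(V_m) + Σ_{t=m+1}^{T} [f_t(x_{t−m},…,x_t) − f_t(u,…,u)] ≤ Σ_{t=m+1}^{T} [Z_t(x_t) − Z_t(u)] + G·(m+1)·Φ′(V_T). -/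
/-!
(i) The positive part of a sum is at most the sum of the positive parts, so each surrogate loss
is dominated by the sum of its penalised components; regrouping the component `i` of round `t`
with the decision `x_{t-i}` it acts on turns these sums into the forward losses.

(ii) By the mean value theorem and monotonicity of `Φ'`, `Φ(V_T) - Φ(V_m) ≤ Σ Φ'(V_t) g_t⁺`.
Replacing `Φ'(V_t)` by the lagged weight `Φ'(V_{t-m-1})` of the surrogate costs at most
`G · Σ (Φ'(V_t) - Φ'(V_{t-m-1}))`, a telescoping sum with only `m + 1` surviving terms, each at
most `Φ'(V_T)`.
-/

open Finset

lemma sum_Icc_sum_range_shift {M : Type*} [AddCommMonoid M] {a b : ℕ} (k : ℕ)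
    (h : ℕ → ℕ → M) (h0 : ∀ t i, t < a + i ∨ b < t → h t i = 0) :
    ∑ t ∈ Icc a b, ∑ i ∈ range k, h (t + i) i = ∑ t ∈ Icc a b, ∑ i ∈ range k, h t i := by
  rw [sum_comm, sum_comm (s := Icc a b)]
  refine sum_congr rfl fun i _ => ?_
  calc ∑ t ∈ Icc a b, h (t + i) i = ∑ t ∈ Icc (a + i) (b + i), h t i := by
        rw [← map_add_right_Icc, sum_map]; rfl
    _ = ∑ t ∈ Icc a (b + i), h t i :=
        sum_subset (Icc_subset_Icc_left (by omega)) fun t ht ht' =>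
          h0 t i (Or.inl (by simp only [mem_Icc] at ht ht'; omega))
    _ = ∑ t ∈ Icc a b, h t i :=
        (sum_subset (Icc_subset_Icc_right (by omega)) fun t ht ht' =>
          h0 t i (Or.inr (by simp only [mem_Icc] at ht ht'; omega))).symm

lemma sum_range_sub_shift {G : Type*} [AddCommGroup G] (a : ℕ → G) (N k : ℕ) :
    ∑ s ∈ range N, (a (k + s) - a s) = ∑ j ∈ range k, (a (N + j) - a j) := by
  have hN := sum_range_add a N k
  have hk := sum_range_add a k N
  rw [add_comm k N, hN] at hk
  simp only [sum_sub_distrib]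
  rw [sub_eq_sub_iff_add_eq_add, add_comm, ← hk, add_comm]

lemma sum_Icc_sub_lag_le {a : ℕ → ℝ} {m T : ℕ} (hmT : m ≤ T) (ha : MonotoneOn a (Set.Iic T))
    (ha0 : ∀ t ≤ T, 0 ≤ a t) :
    ∑ t ∈ Icc (m + 1) T, (a t - a (t - m - 1)) ≤ (m + 1) * a T := by
  have hshift : ∑ t ∈ Icc (m + 1) T, (a t - a (t - m - 1))
      = ∑ j ∈ range (m + 1), (a (T - m + j) - a j) := by
    rw [← Ico_add_one_right_eq_Icc, sum_Ico_eq_sum_range, show T + 1 - (m + 1) = T - m by omega,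
      ← sum_range_sub_shift]
    exact sum_congr rfl fun s _ => by rw [show m + 1 + s - m - 1 = s by omega]
  rw [hshift]
  calc ∑ j ∈ range (m + 1), (a (T - m + j) - a j) ≤ ∑ j ∈ range (m + 1), a T := by
        refine sum_le_sum fun j hj => ?_
        rw [mem_range] at hj
        have hj0 := ha0 j (by omega)
        have hjT := ha (Set.mem_Iic.2 (by omega)) (Set.mem_Iic.2 le_rfl)
          (show T - m + j ≤ T by omega)
        linarith
    _ = (m + 1) * a T := by simp

lemma sub_le_deriv_mul_sub_of_monotoneOn {Φ Φ' : ℝ → ℝ}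
    (hΦ : ∀ v ∈ Set.Ici (0 : ℝ), HasDerivAt Φ (Φ' v) v) (hΦ' : MonotoneOn Φ' (Set.Ici 0))
    {a b : ℝ} (ha : 0 ≤ a) (hab : a ≤ b) : Φ b - Φ a ≤ Φ' b * (b - a) := by
  have hΦab : ∀ v ∈ Set.Icc a b, HasDerivAt Φ (Φ' v) v := fun v hv => hΦ v (ha.trans hv.1)
  refine (convex_Icc a b).image_sub_le_mul_sub_of_deriv_le
    (fun v hv => (hΦab v hv).continuousAt.continuousWithinAt)
    (fun v hv => (hΦab v (interior_subset hv)).differentiableAt.differentiableWithinAt)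
    (fun v hv => ?_) a ⟨le_rfl, hab⟩ b ⟨hab, le_rfl⟩ hab
  rw [interior_Icc] at hv
  rw [(hΦab v (Set.Ioo_subset_Icc_self hv)).deriv]
  exact hΦ' (ha.trans hv.1.le) (ha.trans hab) hv.2.le

lemma max_sum_le_sum_max {ι : Type*} (s : Finset ι) (g : ι → ℝ) :
    max (∑ i ∈ s, g i) 0 ≤ ∑ i ∈ s, max (g i) 0 :=
  max_le (sum_le_sum fun _ _ => le_max_left _ _) (sum_nonneg fun _ _ => le_max_right _ _)

section CumulativeViolation

variable {V W : ℕ → ℝ} {m T : ℕ}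

lemma monotoneOn_Iic_of_increments (hW : ∀ t, 0 ≤ W t) (hV0 : ∀ t ≤ m, V t = 0)
    (hVrec : ∀ t, m + 1 ≤ t → t ≤ T → V t = V (t - 1) + W t) : MonotoneOn V (Set.Iic T) := by
  refine monotoneOn_of_le_succ Set.ordConnected_Iic fun t _ _ ht => ?_
  rw [Order.succ_eq_add_one, Set.mem_Iic] at *
  rcases le_or_gt (t + 1) m with h | h
  · rw [hV0 t (by omega), hV0 (t + 1) h]
  · rw [hVrec (t + 1) h ht, Nat.add_sub_cancel]
    linarith [hW (t + 1)]

lemma nonneg_of_increments (hW : ∀ t, 0 ≤ W t) (hV0 : ∀ t ≤ m, V t = 0)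
    (hVrec : ∀ t, m + 1 ≤ t → t ≤ T → V t = V (t - 1) + W t) : ∀ t ≤ T, 0 ≤ V t := fun t ht =>
  (hV0 0 m.zero_le).symm.le.trans
    (monotoneOn_Iic_of_increments hW hV0 hVrec (Set.mem_Iic.2 T.zero_le) ht t.zero_le)

lemma sub_le_sum_deriv_mul_increment {Φ Φ' : ℝ → ℝ}
    (hΦ : ∀ v ∈ Set.Ici (0 : ℝ), HasDerivAt Φ (Φ' v) v) (hΦ' : MonotoneOn Φ' (Set.Ici 0))
    (hmT : m ≤ T) (hW : ∀ t, 0 ≤ W t) (hV : ∀ t ≤ T, 0 ≤ V t)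
    (hVrec : ∀ t, m + 1 ≤ t → t ≤ T → V t = V (t - 1) + W t) :
    Φ (V T) - Φ (V m) ≤ ∑ t ∈ Icc (m + 1) T, Φ' (V t) * W t := by
  rw [← Ico_add_one_right_eq_Icc, ← sum_Ico_add' (fun t => Φ' (V t) * W t),
    ← sum_Ico_sub (fun t => Φ (V t)) hmT]
  refine sum_le_sum fun t ht => ?_
  rw [mem_Ico] at ht
  have hstep := hVrec (t + 1) (by omega) (by omega)
  rw [Nat.add_sub_cancel] at hstep
  calc Φ (V (t + 1)) - Φ (V t) ≤ Φ' (V (t + 1)) * (V (t + 1) - V t) :=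
        sub_le_deriv_mul_sub_of_monotoneOn hΦ hΦ' (hV t (by omega)) (by linarith [hW (t + 1)])
    _ = Φ' (V (t + 1)) * W (t + 1) := by rw [hstep]; ring

lemma sub_le_sum_lagged_deriv_mul_increment {Φ Φ' : ℝ → ℝ} {G : ℝ}
    (hΦ : ∀ v ∈ Set.Ici (0 : ℝ), HasDerivAt Φ (Φ' v) v) (hΦ' : MonotoneOn Φ' (Set.Ici 0))
    (hΦ'0 : ∀ v ∈ Set.Ici (0 : ℝ), 0 ≤ Φ' v) (hmT : m ≤ T) (hW : ∀ t, 0 ≤ W t)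
    (hWG : ∀ t, W t ≤ G) (hV0 : ∀ t ≤ m, V t = 0)
    (hVrec : ∀ t, m + 1 ≤ t → t ≤ T → V t = V (t - 1) + W t) :
    Φ (V T) - Φ (V m)
      ≤ ∑ t ∈ Icc (m + 1) T, Φ' (V (t - m - 1)) * W t + G * (m + 1) * Φ' (V T) := by
  have hV := nonneg_of_increments hW hV0 hVrec
  have hΦ'V : MonotoneOn (fun t => Φ' (V t)) (Set.Iic T) :=
    hΦ'.comp (monotoneOn_Iic_of_increments hW hV0 hVrec) hV
  have hlag : ∀ t ∈ Icc (m + 1) T, Φ' (V (t - m - 1)) ≤ Φ' (V t) := fun t ht => by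
    rw [mem_Icc] at ht
    exact hΦ'V (Set.mem_Iic.2 (by omega)) (Set.mem_Iic.2 ht.2) (by omega)
  have hG : 0 ≤ G := (hW 0).trans (hWG 0)
  calc Φ (V T) - Φ (V m) ≤ ∑ t ∈ Icc (m + 1) T, Φ' (V t) * W t :=
        sub_le_sum_deriv_mul_increment hΦ hΦ' hmT hW hV hVrec
    _ = ∑ t ∈ Icc (m + 1) T, Φ' (V (t - m - 1)) * W t
          + ∑ t ∈ Icc (m + 1) T, (Φ' (V t) - Φ' (V (t - m - 1))) * W t := by
        rw [← sum_add_distrib]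
        exact sum_congr rfl fun _ _ => by ring
    _ ≤ ∑ t ∈ Icc (m + 1) T, Φ' (V (t - m - 1)) * W t
          + G * ∑ t ∈ Icc (m + 1) T, (Φ' (V t) - Φ' (V (t - m - 1))) := by
        rw [mul_sum]
        refine add_le_add_right (sum_le_sum fun t ht => ?_) _
        rw [mul_comm G]
        exact mul_le_mul_of_nonneg_left (hWG t) (sub_nonneg.2 (hlag t ht))
    _ ≤ ∑ t ∈ Icc (m + 1) T, Φ' (V (t - m - 1)) * W t + G * ((m + 1) * Φ' (V T)) := by
        gcongr
        exact sum_Icc_sub_lag_le hmT hΦ'V fun t ht => hΦ'0 _ (hV t ht)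
    _ = _ := by ring

end CumulativeViolation

lemma apply_window_of_separable {E M : Type*} [AddCommMonoid M] {m t : ℕ} (ht : m ≤ t)
    (x : ℕ → E) {F : (Fin (m + 1) → E) → M} {c : ℕ → E → M}
    (hF : ∀ z : Fin (m + 1) → E,
      F z = ∑ i ∈ range (m + 1), c i (z ⟨m - i, Nat.lt_succ_of_le (Nat.sub_le m i)⟩)) :
    F (fun j => x (t - m + (j : ℕ))) = ∑ i ∈ range (m + 1), c i (x (t - i)) := by
  rw [hF]
  refine sum_congr rfl fun i hi => ?_
  rw [mem_range] at hi
  rw [show t - m + (m - i) = t - i by omega]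

section Separable

variable {E : Type*} {m T : ℕ} (fi gi : ℕ → ℕ → E → ℝ)

lemma sum_surrogate_le_sum_forward (x : ℕ → E) (p : ℕ → ℝ) (hp : ∀ s ≤ T, 0 ≤ p s)
    (hfi0 : ∀ t i, t < m + 1 + i ∨ T < t → ∀ y, fi t i y = 0)
    (hgi0 : ∀ t i, t < m + 1 + i ∨ T < t → ∀ y, gi t i y = 0) :
    ∑ t ∈ Icc (m + 1) T, (∑ i ∈ range (m + 1), fi t i (x (t - i))
        + p (t - m - 1) * max (∑ i ∈ range (m + 1), gi t i (x (t - i))) 0)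
      ≤ ∑ t ∈ Icc (m + 1) T, ∑ i ∈ range (m + 1),
          (fi (t + i) i (x t) + p (t - m - 1 + i) * max (gi (t + i) i (x t)) 0) := by
  set h : ℕ → ℕ → ℝ := fun t i =>
    fi t i (x (t - i)) + p (t - m - 1) * max (gi t i (x (t - i))) 0 with h_def
  calc _ ≤ ∑ t ∈ Icc (m + 1) T, ∑ i ∈ range (m + 1), h t i := by
        refine sum_le_sum fun t ht => ?_
        rw [mem_Icc] at ht
        rw [h_def, sum_add_distrib, ← mul_sum]
        exact add_le_add_right (mul_le_mul_of_nonneg_left (max_sum_le_sum_max _ _)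
          (hp _ (by omega))) _
    _ = ∑ t ∈ Icc (m + 1) T, ∑ i ∈ range (m + 1), h (t + i) i :=
        (sum_Icc_sum_range_shift _ h fun t i hti => by
          simp [h_def, hfi0 t i hti, hgi0 t i hti]).symm
    _ = _ := sum_congr rfl fun t ht => sum_congr rfl fun i _ => by
        rw [mem_Icc] at ht
        simp only [h_def, Nat.add_sub_cancel, show t + i - m - 1 = t - m - 1 + i by omega]

lemma sum_forward_eq_of_nonpos (u : E) (q : ℕ → ℕ → ℝ)
    (hu : ∀ t ∈ Icc (m + 1) T, ∀ i ∈ range (m + 1), gi t i u ≤ 0)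
    (hfi0 : ∀ t i, t < m + 1 + i ∨ T < t → ∀ y, fi t i y = 0)
    (hgi0 : ∀ t i, T < t → ∀ y, gi t i y = 0) :
    ∑ t ∈ Icc (m + 1) T, ∑ i ∈ range (m + 1),
        (fi (t + i) i u + q t i * max (gi (t + i) i u) 0)
      = ∑ t ∈ Icc (m + 1) T, ∑ i ∈ range (m + 1), fi t i u := by
  rw [← sum_Icc_sum_range_shift _ (fun t i => fi t i u) fun t i hti => hfi0 t i hti u]
  refine sum_congr rfl fun t ht => sum_congr rfl fun i hi => ?_
  rw [mem_Icc] at ht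
  have hg : gi (t + i) i u ≤ 0 := by
    by_cases htT : t + i ≤ T
    · exact hu _ (mem_Icc.2 ⟨by omega, htT⟩) i hi
    · exact (hgi0 _ i (by omega) u).le
  rw [max_eq_right hg, mul_zero, add_zero]

end Separable

theorem forward_loss_decomposition_general
    (d m T : ℕ) (hT : m + 1 ≤ T)
    -- arbitrary decisions
    (x : ℕ → EuclideanSpace ℝ (Fin d))
    (f g : ℕ → (Fin (m + 1) → EuclideanSpace ℝ (Fin d)) → ℝ)
    (G : ℝ)
    -- 0 ≤ g_t⁺ ≤ G pointwise
    (hgbd : ∀ t z, max (g t z) 0 ≤ G)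
    -- cumulative violation
    (V : ℕ → ℝ)
    (hV0 : ∀ t ≤ m, V t = 0)
    (hVrec : ∀ t, m + 1 ≤ t → t ≤ T →
      V t = V (t - 1) + max (g t (fun i => x (t - m + (i : ℕ)))) 0)
    -- penalty function: convex, differentiable, Φ′ nonnegative and nondecreasing
    (Φ Φ' : ℝ → ℝ)
    (hΦderiv : ∀ v ∈ Set.Ici (0:ℝ), HasDerivAt Φ (Φ' v) v)
    (hΦ'nonneg : ∀ v ∈ Set.Ici (0:ℝ), 0 ≤ Φ' v)
    (hΦ'mono : MonotoneOn Φ' (Set.Ici 0))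
    -- memory-based surrogate losses
    (L : ℕ → (Fin (m + 1) → EuclideanSpace ℝ (Fin d)) → ℝ)
    (hL : ∀ t z, L t z = f t z + Φ' (V (t - m - 1)) * max (g t z) 0)
    -- separable components: the i-th component acts on the decision made
    -- i rounds before t (coordinate m−i of the tuple)
    (fi gi : ℕ → ℕ → EuclideanSpace ℝ (Fin d) → ℝ)
    (hsepf : ∀ t, ∀ z : Fin (m + 1) → EuclideanSpace ℝ (Fin d),
      f t z = ∑ i ∈ Finset.range (m + 1),
        fi t i (z ⟨m - i, Nat.lt_succ_of_le (Nat.sub_le m i)⟩))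
    (hsepg : ∀ t, ∀ z : Fin (m + 1) → EuclideanSpace ℝ (Fin d),
      g t z = ∑ i ∈ Finset.range (m + 1),
        gi t i (z ⟨m - i, Nat.lt_succ_of_le (Nat.sub_le m i)⟩))
    -- convention: components vanish when t ≤ m, t > T, or t − i ≤ m
    (hfi0 : ∀ t i, t ≤ m ∨ T < t ∨ t - i ≤ m → ∀ y, fi t i y = 0)
    (hgi0 : ∀ t i, t ≤ m ∨ T < t ∨ t - i ≤ m → ∀ y, gi t i y = 0)
    -- forward losses
    (Z : ℕ → EuclideanSpace ℝ (Fin d) → ℝ)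
    (hZ : ∀ t y, Z t y = ∑ i ∈ Finset.range (m + 1),
      (fi (t + i) i y + Φ' (V (t - m - 1 + i)) * max (gi (t + i) i y) 0)) :
    (∑ t ∈ Finset.Icc (m + 1) T, L t (fun i => x (t - m + (i : ℕ)))
        ≤ ∑ t ∈ Finset.Icc (m + 1) T, Z t (x t)) ∧
    (∀ u : EuclideanSpace ℝ (Fin d),
      (∀ t ∈ Finset.Icc (m + 1) T, ∀ i ∈ Finset.range (m + 1), gi t i u ≤ 0) →
      (∑ t ∈ Finset.Icc (m + 1) T, Z t u
          = ∑ t ∈ Finset.Icc (m + 1) T, L t (fun _ => u)) ∧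
      (Φ (V T) - Φ (V m)
          + ∑ t ∈ Finset.Icc (m + 1) T,
              (f t (fun i => x (t - m + (i : ℕ))) - f t (fun _ => u))
        ≤ ∑ t ∈ Finset.Icc (m + 1) T, (Z t (x t) - Z t u)
            + G * (m + 1) * Φ' (V T))) := by
  have hfi0' : ∀ t i, t < m + 1 + i ∨ T < t → ∀ y, fi t i y = 0 := fun t i h => hfi0 t i (by omega)
  have hgi0' : ∀ t i, t < m + 1 + i ∨ T < t → ∀ y, gi t i y = 0 := fun t i h => hgi0 t i (by omega)
  have hW : ∀ t, 0 ≤ max (g t (fun i => x (t - m + (i : ℕ)))) 0 := fun t => le_max_right _ _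
  have hp : ∀ s ≤ T, 0 ≤ Φ' (V s) := fun s hs =>
    hΦ'nonneg _ (nonneg_of_increments hW hV0 hVrec s hs)
  have part1 := calc
    ∑ t ∈ Icc (m + 1) T, L t (fun i => x (t - m + (i : ℕ)))
        = ∑ t ∈ Icc (m + 1) T, (∑ i ∈ range (m + 1), fi t i (x (t - i))
            + Φ' (V (t - m - 1)) * max (∑ i ∈ range (m + 1), gi t i (x (t - i))) 0) :=
        sum_congr rfl fun t ht => by
          have hmt : m ≤ t := by rw [mem_Icc] at ht; omega
          rw [hL, apply_window_of_separable hmt x (hsepf t),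
            apply_window_of_separable hmt x (hsepg t)]
    _ ≤ _ := sum_surrogate_le_sum_forward fi gi x (fun s => Φ' (V s)) hp hfi0' hgi0'
    _ = ∑ t ∈ Icc (m + 1) T, Z t (x t) := sum_congr rfl fun t _ => (hZ t (x t)).symm
  refine ⟨part1, fun u hu => ?_⟩
  have hZu : ∑ t ∈ Icc (m + 1) T, Z t u = ∑ t ∈ Icc (m + 1) T, f t (fun _ => u) := by
    simp only [hZ, hsepf]
    exact sum_forward_eq_of_nonpos fi gi u _ hu hfi0' fun t i h => hgi0' t i (Or.inr h)
  have hLu : ∑ t ∈ Icc (m + 1) T, L t (fun _ => u) = ∑ t ∈ Icc (m + 1) T, f t (fun _ => u) :=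
    sum_congr rfl fun t ht => by
      rw [hL, max_eq_right (by rw [hsepg]; exact sum_nonpos (hu t ht)), mul_zero, add_zero]
  refine ⟨hZu.trans hLu.symm, ?_⟩
  have hpen := sub_le_sum_lagged_deriv_mul_increment hΦderiv hΦ'mono hΦ'nonneg (by omega) hW
    (fun t => hgbd t _) hV0 hVrec
  have hLx := sum_congr rfl fun t (_ : t ∈ Icc (m + 1) T) => hL t (fun i => x (t - m + (i : ℕ)))
  rw [sum_add_distrib] at hLx
  rw [sum_sub_distrib, sum_sub_distrib]
  linarith

/-- Forward-loss decomposition under separability: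
(i) `Σ_{t=m+1}^T L_t(x_{t−m},…,x_t) ≤ Σ_{t=m+1}^T Z_t(x_t)`;
(ii) for every `u` with `g_t^i(u) ≤ 0` for all `t, i`,
`Σ Z_t(u) = Σ L_t(u,…,u)` and consequently
`Φ(V_T) − Φ(V_m) + Σ [f_t(x_{t−m},…,x_t) − f_t(u,…,u)]
  ≤ Σ [Z_t(x_t) − Z_t(u)] + G·(m+1)·Φ′(V_T)`. -/
theorem forward_loss_decomposition
    (d m T : ℕ) (hd : 0 < d) (hm : 0 < m) (hT : m + 1 ≤ T)
    -- arbitrary decisions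
    (x : ℕ → EuclideanSpace ℝ (Fin d))
    (f g : ℕ → (Fin (m + 1) → EuclideanSpace ℝ (Fin d)) → ℝ)
    (G : ℝ) (hG : 0 ≤ G)
    -- 0 ≤ g_t⁺ ≤ G pointwise
    (hgbd : ∀ t z, max (g t z) 0 ≤ G)
    -- convention: f_t = 0 and g_t = 0 outside {m+1,…,T}
    (hf0 : ∀ t, t ≤ m ∨ T < t → ∀ z, f t z = 0)
    (hg0 : ∀ t, t ≤ m ∨ T < t → ∀ z, g t z = 0)
    -- cumulative violation
    (V : ℕ → ℝ)
    (hV0 : ∀ t ≤ m, V t = 0)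
    (hVrec : ∀ t, m + 1 ≤ t → t ≤ T →
      V t = V (t - 1) + max (g t (fun i => x (t - m + (i : ℕ)))) 0)
    -- penalty function: convex, differentiable, Φ′ nonnegative and nondecreasing
    (Φ Φ' : ℝ → ℝ)
    (hΦconv : ConvexOn ℝ (Set.Ici 0) Φ)
    (hΦderiv : ∀ v ∈ Set.Ici (0:ℝ), HasDerivAt Φ (Φ' v) v)
    (hΦ'nonneg : ∀ v ∈ Set.Ici (0:ℝ), 0 ≤ Φ' v)
    (hΦ'mono : MonotoneOn Φ' (Set.Ici 0))
    (hΦnonneg : ∀ v ∈ Set.Ici (0:ℝ), 0 ≤ Φ v)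
    -- memory-based surrogate losses
    (L : ℕ → (Fin (m + 1) → EuclideanSpace ℝ (Fin d)) → ℝ)
    (hL : ∀ t z, L t z = f t z + Φ' (V (t - m - 1)) * max (g t z) 0)
    -- separable components: the i-th component acts on the decision made
    -- i rounds before t (coordinate m−i of the tuple)
    (fi gi : ℕ → ℕ → EuclideanSpace ℝ (Fin d) → ℝ)
    (hsepf : ∀ t, ∀ z : Fin (m + 1) → EuclideanSpace ℝ (Fin d),
      f t z = ∑ i ∈ Finset.range (m + 1),
        fi t i (z ⟨m - i, Nat.lt_succ_of_le (Nat.sub_le m i)⟩))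
    (hsepg : ∀ t, ∀ z : Fin (m + 1) → EuclideanSpace ℝ (Fin d),
      g t z = ∑ i ∈ Finset.range (m + 1),
        gi t i (z ⟨m - i, Nat.lt_succ_of_le (Nat.sub_le m i)⟩))
    -- convention: components vanish when t ≤ m, t > T, or t − i ≤ m
    (hfi0 : ∀ t i, t ≤ m ∨ T < t ∨ t - i ≤ m → ∀ y, fi t i y = 0)
    (hgi0 : ∀ t i, t ≤ m ∨ T < t ∨ t - i ≤ m → ∀ y, gi t i y = 0)
    -- forward losses
    (Z : ℕ → EuclideanSpace ℝ (Fin d) → ℝ)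
    (hZ : ∀ t y, Z t y = ∑ i ∈ Finset.range (m + 1),
      (fi (t + i) i y + Φ' (V (t - m - 1 + i)) * max (gi (t + i) i y) 0)) :
    (∑ t ∈ Finset.Icc (m + 1) T, L t (fun i => x (t - m + (i : ℕ)))
        ≤ ∑ t ∈ Finset.Icc (m + 1) T, Z t (x t)) ∧
    (∀ u : EuclideanSpace ℝ (Fin d),
      (∀ t ∈ Finset.Icc (m + 1) T, ∀ i ∈ Finset.range (m + 1), gi t i u ≤ 0) →
      (∑ t ∈ Finset.Icc (m + 1) T, Z t u
          = ∑ t ∈ Finset.Icc (m + 1) T, L t (fun _ => u)) ∧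
      (Φ (V T) - Φ (V m)
          + ∑ t ∈ Finset.Icc (m + 1) T,
              (f t (fun i => x (t - m + (i : ℕ))) - f t (fun _ => u))
        ≤ ∑ t ∈ Finset.Icc (m + 1) T, (Z t (x t) - Z t u)
            + G * (m + 1) * Φ' (V T))) :=
  forward_loss_decomposition_general d m T hT x f g G hgbd V hV0 hVrec Φ Φ' hΦderiv hΦ'nonneg
    hΦ'mono L hL fi gi hsepf hsepg hfi0 hgi0 Z hZ
end
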